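/- arXiv:2105.05036 — 5 statements merged into one kernel-verified Lean document; each statement's English description precedes it below -/
import Mathlib

section
/- For the Gaussian γ_ε on ℝⁿ and any measurable function B on a measure space Ω with ‖B‖_{1,∞} finite, one has ‖γ_ε ⊗ B‖_{L^{1,∞}(ℝⁿ×Ω)} ≥ (1/4) σ_ε(B(0,R_ε)) ‖B‖_{L^{1,∞}(Ω)}, where σ_ε(B(0,R_ε)) is the Gaussian mass of the half-height ball B(0,R_ε). -/
open MeasureTheory
open scoped NNReal ENNReal

/-- The weak-L¹ quasinorm `‖g‖_{1,∞} = sup_{λ>0} λ μ{|g| > λ}`. -/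
noncomputable def wnorm1 {Ω : Type*} [MeasurableSpace Ω] (μ : Measure Ω) (g : Ω → ℂ) : ℝ≥0∞ :=
  ⨆ t : ℝ≥0, (t : ℝ≥0∞) * μ {ω | (t : ℝ) < ‖g ω‖}

/-- For the L¹-normalized Gaussian `γ_ε` on `ℝⁿ` and any measurable `B` on a σ-finite
measure space with finite weak-L¹ norm,
`‖γ_ε ⊗ B‖_{L^{1,∞}(ℝⁿ×Ω)} ≥ (1/4) σ_ε(B(0,R_ε)) ‖B‖_{L^{1,∞}(Ω)}`, where
`σ_ε(B(0,R_ε))` is the Gaussian mass of the half-height ball `B(0, √(log 2/ε))`. -/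
theorem weak_L1_tensor_gaussian_lower_bound (n : ℕ)
    {Ω : Type*} [MeasurableSpace Ω] (μ : Measure Ω) [SigmaFinite μ]
    (B : Ω → ℂ) (hB : Measurable B) (hBfin : wnorm1 μ B ≠ ⊤)
    (ε : ℝ) (hε : 0 < ε) :
    ENNReal.ofReal (1 / 4) *
        (volume.withDensity
            (fun x : EuclideanSpace ℝ (Fin n) =>
              ENNReal.ofReal ((ε / Real.pi) ^ ((n : ℝ) / 2) * Real.exp (-ε * ‖x‖ ^ 2))))
          (Metric.ball (0 : EuclideanSpace ℝ (Fin n)) (Real.sqrt (Real.log 2 / ε))) *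
        wnorm1 μ B
      ≤ wnorm1 (volume.prod μ)
          (fun p : EuclideanSpace ℝ (Fin n) × Ω =>
            ((ε / Real.pi) ^ ((n : ℝ) / 2) * Real.exp (-ε * ‖p.1‖ ^ 2) : ℝ) * B p.2) := by
  set A : ℝ := (ε / Real.pi) ^ ((n : ℝ) / 2) with hAdef
  have hApos : 0 < A := Real.rpow_pos_of_pos (div_pos hε Real.pi_pos) _
  set R : ℝ := Real.sqrt (Real.log 2 / ε) with hRdef
  set ball := Metric.ball (0 : EuclideanSpace ℝ (Fin n)) R with hballdef
  -- the Gaussian mass of the ball is at most `A * volume ball`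
  have hσ : (volume.withDensity fun x : EuclideanSpace ℝ (Fin n) =>
      ENNReal.ofReal (A * Real.exp (-ε * ‖x‖ ^ 2))) ball
      ≤ ENNReal.ofReal A * volume ball := by
    rw [withDensity_apply _ measurableSet_ball]
    calc ∫⁻ x in ball, ENNReal.ofReal (A * Real.exp (-ε * ‖x‖ ^ 2)) ∂volume
        ≤ ∫⁻ _ in ball, ENNReal.ofReal A ∂volume := by
          refine lintegral_mono fun x => ENNReal.ofReal_le_ofReal ?_
          have h1 : Real.exp (-ε * ‖x‖ ^ 2) ≤ 1 := by
            rw [Real.exp_le_one_iff]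
            nlinarith [sq_nonneg ‖x‖]
          nlinarith
      _ = ENNReal.ofReal A * volume ball := by
          rw [setLIntegral_const]
  -- the main lower bound with constant `A/2`
  have hmain : ENNReal.ofReal (A / 2) * volume ball * wnorm1 μ B ≤
      wnorm1 (volume.prod μ)
        (fun p : EuclideanSpace ℝ (Fin n) × Ω =>
          ((A * Real.exp (-ε * ‖p.1‖ ^ 2) : ℝ) : ℂ) * B p.2) := by
    rw [wnorm1, ENNReal.mul_iSup]
    refine iSup_le fun s => ?_
    set t : ℝ≥0 := (A / 2).toNNReal * s with htdef
    have hts : (t : ℝ≥0∞) = ENNReal.ofReal (A / 2) * (s : ℝ≥0∞) := by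
      rw [htdef, ENNReal.coe_mul, ENNReal.ofReal]
    have htr : (t : ℝ) = (A / 2) * (s : ℝ) := by
      rw [htdef]
      push_cast [Real.coe_toNNReal _ (by positivity : (0:ℝ) ≤ A / 2)]
      ring
    have hsubset : ball ×ˢ {ω | (s : ℝ) < ‖B ω‖} ⊆
        {p : EuclideanSpace ℝ (Fin n) × Ω |
          (t : ℝ) < ‖((A * Real.exp (-ε * ‖p.1‖ ^ 2) : ℝ) : ℂ) * B p.2‖} := by
      rintro ⟨x, ω⟩ ⟨hx, hω⟩
      simp only [Set.mem_setOf_eq] at hω ⊢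
      have hexp : (1 : ℝ) / 2 < Real.exp (-ε * ‖x‖ ^ 2) := by
        have hxR : ‖x‖ < R := by simpa [hballdef, dist_eq_norm] using hx
        have hR2 : R ^ 2 = Real.log 2 / ε := by
          rw [hRdef, Real.sq_sqrt]
          positivity
        have hx2 : ‖x‖ ^ 2 < Real.log 2 / ε := by
          nlinarith [norm_nonneg x]
        have h3 : ε * ‖x‖ ^ 2 < Real.log 2 := by
          rw [lt_div_iff₀ hε] at hx2; linarith
        calc (1:ℝ)/2 = Real.exp (-Real.log 2) := by
              rw [Real.exp_neg, Real.exp_log (by norm_num : (0:ℝ) < 2)]; norm_num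
          _ < Real.exp (-ε * ‖x‖ ^ 2) := Real.exp_lt_exp.mpr (by nlinarith)
      have hnorm : ‖((A * Real.exp (-ε * ‖x‖ ^ 2) : ℝ) : ℂ) * B ω‖
          = A * Real.exp (-ε * ‖x‖ ^ 2) * ‖B ω‖ := by
        rw [norm_mul, Complex.norm_real, Real.norm_eq_abs, abs_of_pos (by positivity)]
      rw [hnorm, htr]
      have hs0 : (0:ℝ) ≤ (s:ℝ) := s.2
      have hBpos : (0:ℝ) < ‖B ω‖ := lt_of_le_of_lt hs0 hω
      have h1 : (s:ℝ)/2 < Real.exp (-ε * ‖x‖ ^ 2) * ‖B ω‖ := by nlinarith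
      nlinarith [mul_lt_mul_of_pos_left h1 hApos]
    calc ENNReal.ofReal (A / 2) * volume ball * ((s : ℝ≥0∞) * μ {ω | (s : ℝ) < ‖B ω‖})
        = (t : ℝ≥0∞) * (volume ball * μ {ω | (s : ℝ) < ‖B ω‖}) := by rw [hts]; ring
      _ = (t : ℝ≥0∞) * (volume.prod μ) (ball ×ˢ {ω | (s : ℝ) < ‖B ω‖}) := by
          rw [Measure.prod_prod]
      _ ≤ (t : ℝ≥0∞) * (volume.prod μ)
            {p : EuclideanSpace ℝ (Fin n) × Ω |
              (t : ℝ) < ‖((A * Real.exp (-ε * ‖p.1‖ ^ 2) : ℝ) : ℂ) * B p.2‖} := by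
          exact mul_le_mul_right (measure_mono hsubset) _
      _ ≤ _ := le_iSup (fun u : ℝ≥0 => (u : ℝ≥0∞) *
            (volume.prod μ) {p : EuclideanSpace ℝ (Fin n) × Ω |
              (u : ℝ) < ‖((A * Real.exp (-ε * ‖p.1‖ ^ 2) : ℝ) : ℂ) * B p.2‖}) t
  calc ENNReal.ofReal (1 / 4) *
        (volume.withDensity fun x : EuclideanSpace ℝ (Fin n) =>
          ENNReal.ofReal (A * Real.exp (-ε * ‖x‖ ^ 2))) ball * wnorm1 μ B
      ≤ ENNReal.ofReal (1 / 4) * (ENNReal.ofReal A * volume ball) * wnorm1 μ B := by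
        gcongr
    _ = ENNReal.ofReal (1 / 4 * A) * volume ball * wnorm1 μ B := by
        rw [ENNReal.ofReal_mul (by norm_num : (0:ℝ) ≤ 1/4)]; ring
    _ ≤ ENNReal.ofReal (A / 2) * volume ball * wnorm1 μ B := by
        gcongr
        linarith
    _ ≤ _ := hmain
end

section
/- If m : ℝ₊ → ℂ satisfies the Mikhlin condition |d^k m(ξ)/dξ^k| ≤ C |ξ|^{−k} for all ξ > 0 and 0 ≤ k ≤ [n/2]+1, then the lifted radial symbol m̃ : ℝⁿ → ℂ, m̃(ξ) = m(|ξ|²), satisfies the Hörmander–Mikhlin condition in n variables: |∂^γ m̃(ξ)| ≲ C |ξ|^{−|γ|} for all ξ ≠ 0 and multi-indices 0 ≤ |γ| ≤ [n/2]+1. -/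
open Set

/-- Scaling lemma for one-dimensional iterated derivatives within `Ioi 0`. -/
private lemma iteratedDerivWithin_comp_const_mul_Ioi {m : ℝ → ℂ} {N : ℕ}
    (hm : ContDiffOn ℝ N m (Set.Ioi 0)) {c : ℝ} (hc : 0 < c) :
    ∀ i : ℕ, i ≤ N → ∀ x ∈ Set.Ioi (0:ℝ),
      iteratedDerivWithin i (fun t => m (c * t)) (Set.Ioi 0) x
        = c ^ i • iteratedDerivWithin i m (Set.Ioi 0) (c * x) := by
  intro i
  induction i with
  | zero => intro _ x hx; simp
  | succ i ih =>
    intro hiN x hx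
    have hu : UniqueDiffOn ℝ (Set.Ioi (0:ℝ)) := uniqueDiffOn_Ioi 0
    have hcx : c * x ∈ Set.Ioi (0:ℝ) := mul_pos hc hx
    have hmap : Set.MapsTo (fun y : ℝ => c * y) (Set.Ioi (0:ℝ)) (Set.Ioi (0:ℝ)) :=
      fun y hy => mul_pos hc hy
    have hdiff : DifferentiableOn ℝ (iteratedDerivWithin i m (Set.Ioi 0)) (Set.Ioi 0) :=
      hm.differentiableOn_iteratedDerivWithin
        (by exact_mod_cast Nat.lt_of_succ_le hiN) hu
    have h1 : HasDerivWithinAt (iteratedDerivWithin i m (Set.Ioi 0))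
        (iteratedDerivWithin (i+1) m (Set.Ioi 0) (c * x)) (Set.Ioi 0) (c * x) := by
      have h := (hdiff (c * x) hcx).hasDerivWithinAt
      rwa [← iteratedDerivWithin_succ] at h
    have hmul : HasDerivWithinAt (fun y : ℝ => c * y) c (Set.Ioi 0) x := by
      simpa using ((hasDerivAt_id x).const_mul c).hasDerivWithinAt
    have h2 : HasDerivWithinAt (fun y => iteratedDerivWithin i m (Set.Ioi 0) (c * y))
        (c • iteratedDerivWithin (i+1) m (Set.Ioi 0) (c * x)) (Set.Ioi 0) x := by
      have h := h1.scomp x hmul hmap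
      simpa [Function.comp_def] using h
    have h3 : HasDerivWithinAt
        (iteratedDerivWithin i (fun t => m (c * t)) (Set.Ioi 0))
        ((c ^ i) • c • iteratedDerivWithin (i+1) m (Set.Ioi 0) (c * x)) (Set.Ioi 0) x :=
      (h2.const_smul (c ^ i)).congr
        (fun y hy => ih (Nat.le_of_succ_le hiN) y hy)
        (ih (Nat.le_of_succ_le hiN) x hx)
    rw [iteratedDerivWithin_succ, h3.derivWithin (hu x hx),
      smul_smul, ← pow_succ]

/-- If `m : ℝ₊ → ℂ` satisfies the one-dimensional Mikhlin condition
`|d^k m(ξ)/dξ^k| ≤ C ξ^{-k}` for `ξ > 0` and `0 ≤ k ≤ [n/2]+1`, then the lifted radial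
symbol `m̃(ξ) = m(|ξ|²)` on `ℝⁿ` satisfies the Hörmander–Mikhlin condition
`|∂^γ m̃(ξ)| ≤ D C |ξ|^{-|γ|}` for `ξ ≠ 0` and `0 ≤ |γ| ≤ [n/2]+1`, where `D` depends
only on `n`. -/
theorem mikhlin_lift_radial (n : ℕ) :
    ∃ D : ℝ, 0 < D ∧
      ∀ (C : ℝ), 0 ≤ C → ∀ m : ℝ → ℂ,
        ContDiffOn ℝ (n / 2 + 1 : ℕ) m (Set.Ioi 0) →
        (∀ k : ℕ, k ≤ n / 2 + 1 → ∀ ξ : ℝ, 0 < ξ →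
          ‖iteratedDerivWithin k m (Set.Ioi 0) ξ‖ ≤ C * ξ ^ (-(k : ℝ))) →
        ∀ k : ℕ, k ≤ n / 2 + 1 → ∀ ξ : EuclideanSpace ℝ (Fin n), ξ ≠ 0 →
          ‖iteratedFDerivWithin ℝ k
              (fun ζ : EuclideanSpace ℝ (Fin n) => m (‖ζ‖ ^ 2))
              {ζ : EuclideanSpace ℝ (Fin n) | ζ ≠ 0} ξ‖
            ≤ D * C * ‖ξ‖ ^ (-(k : ℝ)) := by
  classical
  set N : ℕ := n / 2 + 1 with hNdef
  refine ⟨(N.factorial : ℝ) * 2 ^ N, by positivity, ?_⟩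
  intro C hC0 m hm hmik k hk ξ hξ
  have hsopen : IsOpen {ζ : EuclideanSpace ℝ (Fin n) | ζ ≠ 0} := isOpen_ne
  have hsu : UniqueDiffOn ℝ {ζ : EuclideanSpace ℝ (Fin n) | ζ ≠ 0} := hsopen.uniqueDiffOn
  have htu : UniqueDiffOn ℝ (Set.Ioi (0:ℝ)) := uniqueDiffOn_Ioi 0
  have hξmem : ξ ∈ {ζ : EuclideanSpace ℝ (Fin n) | ζ ≠ 0} := hξ
  have hr : (0:ℝ) < ‖ξ‖ := norm_pos_iff.mpr hξ
  set r : ℝ := ‖ξ‖ with hrdef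
  have hc : (0:ℝ) < r ^ 2 := by positivity
  have ha : (0:ℝ) < (r ^ 2)⁻¹ := inv_pos.mpr hc
  -- the rescaled pieces
  have hfg : (fun ζ : EuclideanSpace ℝ (Fin n) => m (‖ζ‖ ^ 2))
      = (fun t => m (r ^ 2 * t)) ∘ (fun ζ : EuclideanSpace ℝ (Fin n) => (r ^ 2)⁻¹ * ‖ζ‖ ^ 2) := by
    funext ζ
    simp only [Function.comp_apply]
    rw [mul_inv_cancel_left₀ hc.ne']
  have hgc : ContDiffOn ℝ N (fun t => m (r ^ 2 * t)) (Set.Ioi 0) := by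
    refine hm.comp (contDiff_const.mul contDiff_id).contDiffOn ?_
    intro t ht
    exact mul_pos hc ht
  have hfc : ContDiffOn ℝ N (fun ζ : EuclideanSpace ℝ (Fin n) => (r ^ 2)⁻¹ * ‖ζ‖ ^ 2)
      {ζ : EuclideanSpace ℝ (Fin n) | ζ ≠ 0} :=
    (contDiff_const.mul (contDiff_norm_sq ℝ)).contDiffOn
  have hst : Set.MapsTo (fun ζ : EuclideanSpace ℝ (Fin n) => (r ^ 2)⁻¹ * ‖ζ‖ ^ 2)
      {ζ : EuclideanSpace ℝ (Fin n) | ζ ≠ 0} (Set.Ioi 0) := by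
    intro ζ hζ
    have hζ' : (0:ℝ) < ‖ζ‖ := norm_pos_iff.mpr hζ
    exact mul_pos ha (by positivity)
  have hfξ : (r ^ 2)⁻¹ * ‖ξ‖ ^ 2 = 1 := by
    rw [← hrdef]
    field_simp
  -- bounds on the derivatives of the rescaled multiplier at 1
  have hgb : ∀ i, i ≤ k →
      ‖iteratedFDerivWithin ℝ i (fun t => m (r ^ 2 * t)) (Set.Ioi 0)
        ((fun ζ : EuclideanSpace ℝ (Fin n) => (r ^ 2)⁻¹ * ‖ζ‖ ^ 2) ξ)‖ ≤ C := by
    intro i hi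
    have hiN : i ≤ N := le_trans hi hk
    simp only [hfξ]
    rw [norm_iteratedFDerivWithin_eq_norm_iteratedDerivWithin,
      iteratedDerivWithin_comp_const_mul_Ioi hm hc i hiN 1 (by norm_num),
      norm_smul, mul_one]
    have hnorm : ‖(r ^ 2) ^ i‖ = (r ^ 2) ^ i := by
      rw [Real.norm_eq_abs, abs_pow, abs_of_pos hc]
    rw [hnorm]
    have h1 := hmik i hiN (r ^ 2) hc
    calc (r ^ 2) ^ i * ‖iteratedDerivWithin i m (Set.Ioi 0) (r ^ 2)‖
        ≤ (r ^ 2) ^ i * (C * (r ^ 2) ^ (-(i:ℝ))) := by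
          have : (0:ℝ) ≤ (r ^ 2) ^ i := by positivity
          exact mul_le_mul_of_nonneg_left h1 this
      _ = C := by
          rw [Real.rpow_neg hc.le, Real.rpow_natCast]
          field_simp
  -- derivative computations for the rescaled quadratic
  have hfd1 : ∀ ζ : EuclideanSpace ℝ (Fin n),
      fderiv ℝ (fun ζ : EuclideanSpace ℝ (Fin n) => (r ^ 2)⁻¹ * ‖ζ‖ ^ 2) ζ
        = (2 * (r ^ 2)⁻¹) • innerSL ℝ ζ := by
    intro ζ
    have h : HasFDerivAt (fun ζ : EuclideanSpace ℝ (Fin n) => (r ^ 2)⁻¹ * ‖ζ‖ ^ 2)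
        ((2 * (r ^ 2)⁻¹) • innerSL ℝ ζ) ζ := by
      have h0 := (hasStrictFDerivAt_norm_sq ζ).hasFDerivAt.const_mul (r ^ 2)⁻¹
      refine h0.congr_fderiv ?_
      ext v
      simp [smul_smul]
      ring
    exact h.fderiv
  have hA : fderiv ℝ (fun ζ : EuclideanSpace ℝ (Fin n) => (r ^ 2)⁻¹ * ‖ζ‖ ^ 2)
      = ⇑((2 * (r ^ 2)⁻¹) • (innerSL ℝ : EuclideanSpace ℝ (Fin n) →L[ℝ]
          EuclideanSpace ℝ (Fin n) →L[ℝ] ℝ)) := by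
    funext ζ
    rw [hfd1 ζ]
    simp
  -- bounds on the derivatives of the rescaled quadratic
  have hfb : ∀ i, 1 ≤ i → i ≤ k →
      ‖iteratedFDerivWithin ℝ i (fun ζ : EuclideanSpace ℝ (Fin n) => (r ^ 2)⁻¹ * ‖ζ‖ ^ 2)
        {ζ : EuclideanSpace ℝ (Fin n) | ζ ≠ 0} ξ‖ ≤ (2 / r) ^ i := by
    intro i hi1 _
    rw [iteratedFDerivWithin_of_isOpen i hsopen hξmem]
    match i, hi1 with
    | 1, _ =>
      have hrne : r ≠ 0 := hr.ne'
      have heq : 2 * (r ^ 2)⁻¹ * r = 2 / r := by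
        field_simp
      rw [← norm_iteratedFDeriv_fderiv (n := 0),
        norm_iteratedFDeriv_zero, hfd1 ξ, norm_smul, innerSL_apply_norm, ← hrdef]
      rw [Real.norm_eq_abs, abs_of_pos (by positivity), pow_one, heq]
    | 2, _ =>
      rw [show (2:ℕ) = 1 + 1 from rfl, ← norm_iteratedFDeriv_fderiv, hA]
      rw [← norm_iteratedFDeriv_fderiv (n := 0),
        norm_iteratedFDeriv_zero, ContinuousLinearMap.fderiv]
      have hAle : ‖(2 * (r ^ 2)⁻¹) • (innerSL ℝ : EuclideanSpace ℝ (Fin n) →L[ℝ]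
          EuclideanSpace ℝ (Fin n) →L[ℝ] ℝ)‖ ≤ 2 * (r ^ 2)⁻¹ := by
        refine ContinuousLinearMap.opNorm_le_bound _ (by positivity) ?_
        intro u
        rw [ContinuousLinearMap.smul_apply, norm_smul, innerSL_apply_norm,
          Real.norm_eq_abs, abs_of_pos (by positivity)]
      refine le_trans hAle ?_
      have h4 : ((2:ℝ)/r)^2 = 4 * (r ^ 2)⁻¹ := by
        rw [div_pow, div_eq_mul_inv]
        norm_num
      rw [h4]
      linarith [ha]
    | (j+3), _ =>
      rw [show j + 3 = (j + 2) + 1 from rfl, ← norm_iteratedFDeriv_fderiv, hA,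
        show j + 2 = (j + 1) + 1 from rfl, ← norm_iteratedFDeriv_fderiv]
      have hconst : fderiv ℝ (⇑((2 * (r ^ 2)⁻¹) • (innerSL ℝ : EuclideanSpace ℝ (Fin n) →L[ℝ]
          EuclideanSpace ℝ (Fin n) →L[ℝ] ℝ)))
          = fun _ : EuclideanSpace ℝ (Fin n) => ((2 * (r ^ 2)⁻¹) • (innerSL ℝ :
            EuclideanSpace ℝ (Fin n) →L[ℝ] EuclideanSpace ℝ (Fin n) →L[ℝ] ℝ)) :=
        funext fun _ => ContinuousLinearMap.fderiv _
      rw [hconst, iteratedFDeriv_const_of_ne (Nat.succ_ne_zero j)]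
      simp only [Pi.zero_apply, norm_zero]
      positivity
  -- apply the Faà di Bruno norm estimate
  have hmain := norm_iteratedFDerivWithin_comp_le hgc hfc
    (by exact_mod_cast hk) htu hsu hst hξmem hgb hfb
  rw [hfg]
  refine le_trans hmain ?_
  have hrw : ((2:ℝ) / r) ^ k = 2 ^ k * r ^ (-(k:ℝ)) := by
    rw [div_pow, Real.rpow_neg hr.le, Real.rpow_natCast, div_eq_mul_inv]
  rw [hrw]
  have h1 : (k.factorial : ℝ) ≤ N.factorial := by
    exact_mod_cast Nat.factorial_le hk
  have h2 : (2:ℝ) ^ k ≤ 2 ^ N := by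
    apply pow_le_pow_right₀ (by norm_num) hk
  have hX : (0:ℝ) ≤ r ^ (-(k:ℝ)) := Real.rpow_nonneg hr.le _
  calc (k.factorial : ℝ) * C * (2 ^ k * r ^ (-(k:ℝ)))
      = ((k.factorial : ℝ) * 2 ^ k) * (C * r ^ (-(k:ℝ))) := by ring
    _ ≤ ((N.factorial : ℝ) * 2 ^ N) * (C * r ^ (-(k:ℝ))) := by
        apply mul_le_mul_of_nonneg_right _ (mul_nonneg hC0 hX)
        exact mul_le_mul h1 h2 (by positivity) (by positivity)
    _ = (N.factorial : ℝ) * 2 ^ N * C * r ^ (-(k:ℝ)) := by ring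
end

section
/- Let (M, τ) be a semifinite von Neumann algebra with martingale filtration (M_j) and conditional expectations E_j, let f ∈ L₁(M)₊ and λ > 0, and let (q_j) be the Cuculescu projections with p_j = q_{j−1} − q_j. Define the diagonal bad parts b_{d,j} = p_j(f − E_j f)p_j. Then E_j(b_{d,j}) = 0 for each j, and ∑_j ‖b_{d,j}‖₁ ≤ 2‖f‖₁. -/
open Matrix
open scoped ComplexOrder

/-- The trace norm `‖A‖₁ = tr √(AᴴA)` of a complex matrix. -/
noncomputable def traceNorm {m : ℕ} (A : Matrix (Fin m) (Fin m) ℂ) : ℝ :=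
  (((Matrix.posSemidef_conjTranspose_mul_self A).1.eigenvectorUnitary : Matrix (Fin m) (Fin m) ℂ) *
    diagonal (((↑) : ℝ → ℂ) ∘ (√·) ∘ (Matrix.posSemidef_conjTranspose_mul_self A).1.eigenvalues) *
    (star (Matrix.posSemidef_conjTranspose_mul_self A).1.eigenvectorUnitary :
      Matrix (Fin m) (Fin m) ℂ)).trace.re

/-!
Write `p j = q j - q (j + 1)`. Since `p j` is fixed by `E (j + 1)`, which is an idempotent
bimodule map over its range,
`E (j + 1) (p j (f - E (j + 1) f) p j) = p j (E (j + 1) f - E (j + 1) f) p j = 0`.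
For the `L¹` bound, `p j f p j` and `p j E (j + 1) f p j = E (j + 1) (p j f p j)` are positive with
equal traces, and the trace norm of a difference of positive matrices is at most the sum of their
traces. Hence `‖b_j‖₁ ≤ 2 tr (p j f) = 2 (tr (q j f) - tr (q (j + 1) f))`, which telescopes
to at most `2 tr f` because `tr (q N f) = tr (q N f q N) ≥ 0`.
-/

open scoped MatrixOrder
open Unitary

theorem Matrix.IsHermitian.trace_cfc {𝕜 n : Type*} [RCLike 𝕜] [Fintype n] [DecidableEq n]
    {A : Matrix n n 𝕜} (hA : A.IsHermitian) (f : ℝ → ℝ) :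
    (cfc f A).trace = ∑ i, (f (hA.eigenvalues i) : 𝕜) := by
  rw [hA.cfc_eq, IsHermitian.cfc, conjStarAlgAut_apply, trace_mul_cycle, coe_star_mul_self,
    one_mul, trace_diagonal]
  rfl

theorem LinearMap.map_mul_sub_map_mul_eq_zero {R A : Type*} [CommSemiring R] [Ring A]
    [Module R A] {Φ : A →ₗ[R] A} (hΦ : Φ ∘ₗ Φ = Φ) {p : A}
    (hp : ∀ x, Φ (p * x * p) = p * Φ x * p) (f : A) : Φ (p * (f - Φ f) * p) = 0 := by
  rw [hp, map_sub, ← LinearMap.comp_apply, hΦ, sub_self, mul_zero, zero_mul]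

theorem Matrix.trace_mul_mul_self_of_isIdempotentElem {n R : Type*} [Fintype n]
    [CommSemiring R] {p : Matrix n n R} (hp : IsIdempotentElem p) (f : Matrix n n R) :
    (p * f * p).trace = (p * f).trace := by
  rw [trace_mul_cycle, hp.eq]

section TraceNorm

variable {m : ℕ}

theorem traceNorm_eq_re_trace_cfcAbs (A : Matrix (Fin m) (Fin m) ℂ) :
    traceNorm A = (CFC.abs A).trace.re := by
  rw [CFC.abs, star_eq_conjTranspose, CFC.sqrt_eq_real_sqrt _
    (posSemidef_conjTranspose_mul_self A).nonneg, cfcₙ_eq_cfc,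
    (posSemidef_conjTranspose_mul_self A).1.cfc_eq, IsHermitian.cfc, conjStarAlgAut_apply,
    traceNorm]
  rfl

theorem traceNorm_of_posSemidef {A : Matrix (Fin m) (Fin m) ℂ} (hA : A.PosSemidef) :
    traceNorm A = A.trace.re := by
  rw [traceNorm_eq_re_trace_cfcAbs, CFC.abs_of_nonneg A hA.nonneg]

theorem Matrix.IsHermitian.traceNorm_eq_sum_abs_eigenvalues {A : Matrix (Fin m) (Fin m) ℂ}
    (hA : A.IsHermitian) : traceNorm A = ∑ i, |hA.eigenvalues i| := by
  rw [traceNorm_eq_re_trace_cfcAbs, CFC.abs_eq_cfc_norm A hA.isSelfAdjoint, hA.trace_cfc,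
    Complex.re_sum]
  simp

/-- In an eigenbasis of `X - Y` each eigenvalue is a difference of two nonnegative diagonal
entries, whose sums are the traces of `X` and `Y`. -/
theorem traceNorm_sub_le {X Y : Matrix (Fin m) (Fin m) ℂ} (hX : X.PosSemidef)
    (hY : Y.PosSemidef) :
    traceNorm (X - Y) ≤ X.trace.re + Y.trace.re := by
  have hA : (X - Y).IsHermitian := hX.1.sub hY.1
  set V : Matrix (Fin m) (Fin m) ℂ := ↑hA.eigenvectorUnitary
  have hdiag {B : Matrix (Fin m) (Fin m) ℂ} (hB : B.PosSemidef) (i : Fin m) :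
      0 ≤ ((star V * B * V) i i).re :=
    (Complex.nonneg_iff.mp (hB.conjTranspose_mul_mul_same V).diag_nonneg).1
  have htrace (B : Matrix (Fin m) (Fin m) ℂ) : (star V * B * V).trace = B.trace := by
    rw [trace_mul_cycle, mem_unitaryGroup_iff.mp hA.eigenvectorUnitary.2, one_mul]
  have heig (i : Fin m) :
      hA.eigenvalues i = ((star V * X * V) i i).re - ((star V * Y * V) i i).re := by
    simpa [mul_sub, sub_mul] using
      congrArg Complex.re (congr_fun₂ hA.conjStarAlgAut_star_eigenvectorUnitary i i).symm
  calc traceNorm (X - Y) = ∑ i, |hA.eigenvalues i| := hA.traceNorm_eq_sum_abs_eigenvalues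
    _ ≤ ∑ i, (((star V * X * V) i i).re + ((star V * Y * V) i i).re) := by
      gcongr with i
      rw [heig, abs_le]
      constructor <;> linarith [hdiag hX i, hdiag hY i]
    _ = X.trace.re + Y.trace.re := by
      rw [Finset.sum_add_distrib, ← htrace X, ← htrace Y, trace, trace, Complex.re_sum,
        Complex.re_sum]
      rfl

theorem traceNorm_compress_sub_le
    {Φ : Matrix (Fin m) (Fin m) ℂ →ₗ[ℂ] Matrix (Fin m) (Fin m) ℂ}
    (hpos : ∀ x, x.PosSemidef → (Φ x).PosSemidef) (htr : ∀ x, (Φ x).trace = x.trace)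
    {p : Matrix (Fin m) (Fin m) ℂ} (hp : IsSelfAdjoint p)
    (hΦp : ∀ x, Φ (p * x * p) = p * Φ x * p) {f : Matrix (Fin m) (Fin m) ℂ}
    (hf : f.PosSemidef) :
    traceNorm (p * (f - Φ f) * p) ≤ 2 * (p * f * p).trace.re := by
  have hcompress {x : Matrix (Fin m) (Fin m) ℂ} (hx : x.PosSemidef) : (p * x * p).PosSemidef := by
    simpa only [← star_eq_conjTranspose, hp.star_eq] using hx.mul_mul_conjTranspose_same p
  calc traceNorm (p * (f - Φ f) * p) = traceNorm (p * f * p - p * Φ f * p) := by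
        rw [mul_sub, sub_mul]
    _ ≤ (p * f * p).trace.re + (p * Φ f * p).trace.re :=
        traceNorm_sub_le (hcompress hf) (hcompress (hpos f hf))
    _ = 2 * (p * f * p).trace.re := by rw [← hΦp, htr, two_mul]

theorem sum_re_trace_compress_sub_le {q : ℕ → Matrix (Fin m) (Fin m) ℂ} (hq0 : q 0 = 1)
    (hq : ∀ j, IsStarProjection (q j)) (hdec : ∀ j, q j * q (j + 1) = q (j + 1))
    {f : Matrix (Fin m) (Fin m) ℂ} (hf : f.PosSemidef) (N : ℕ) :
    ∑ j ∈ Finset.range N, ((q j - q (j + 1)) * f * (q j - q (j + 1))).trace.re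
      ≤ f.trace.re := by
  have hterm (j : ℕ) : ((q j - q (j + 1)) * f * (q j - q (j + 1))).trace.re
      = (q j * f).trace.re - (q (j + 1) * f).trace.re := by
    rw [trace_mul_mul_self_of_isIdempotentElem
      ((hq (j + 1)).sub_of_mul_eq_right (hq j) (hdec j)).isIdempotentElem, sub_mul, trace_sub,
      Complex.sub_re]
  have htail : 0 ≤ (q N * f).trace.re := by
    rw [← trace_mul_mul_self_of_isIdempotentElem (hq N).isIdempotentElem]
    simpa only [← star_eq_conjTranspose, (hq N).isSelfAdjoint.star_eq] using
      (Complex.nonneg_iff.mp (hf.mul_mul_conjTranspose_same (q N)).trace_nonneg).1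
  rw [Finset.sum_congr rfl fun j _ => hterm j, Finset.sum_range_sub', hq0, one_mul]
  linarith

end TraceNorm

theorem cz_diagonal_bad_parts_general {m : ℕ}
    (E : ℕ → Matrix (Fin m) (Fin m) ℂ →ₗ[ℂ] Matrix (Fin m) (Fin m) ℂ)
    (hidem : ∀ j, (E j).comp (E j) = E j)
    (htower : ∀ j k, (E j).comp (E k) = E (min j k))
    (hpos : ∀ j x, x.PosSemidef → (E j x).PosSemidef)
    (htr : ∀ j x, (E j x).trace = x.trace)
    (hbimod : ∀ j (a b x : Matrix (Fin m) (Fin m) ℂ),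
        E j a = a → E j b = b → E j (a * x * b) = a * E j x * b)
    (f : Matrix (Fin m) (Fin m) ℂ) (hf : f.PosSemidef)
    (q : ℕ → Matrix (Fin m) (Fin m) ℂ)
    (hq0 : q 0 = 1)
    (hqmem : ∀ j, E j (q j) = q j)
    (hqproj : ∀ j, (q j)ᴴ = q j ∧ q j * q j = q j)
    (hqdec : ∀ j, q (j + 1) * q j = q (j + 1) ∧ q j * q (j + 1) = q (j + 1)) :
    (∀ j : ℕ,
        E (j + 1) ((q j - q (j + 1)) * (f - E (j + 1) f) * (q j - q (j + 1))) = 0) ∧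
      ∀ N : ℕ,
        ∑ j ∈ Finset.range N,
            traceNorm ((q j - q (j + 1)) * (f - E (j + 1) f) * (q j - q (j + 1)))
          ≤ 2 * traceNorm f := by
  have hproj (j : ℕ) : IsStarProjection (q j) := ⟨(hqproj j).2, (hqproj j).1⟩
  have hqmem_succ (j : ℕ) : E (j + 1) (q j) = q j := by
    rw [← hqmem j, ← LinearMap.comp_apply, htower, min_eq_right j.le_succ]
  have hbimod_p (j : ℕ) (x : Matrix (Fin m) (Fin m) ℂ) :
      E (j + 1) ((q j - q (j + 1)) * x * (q j - q (j + 1)))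
        = (q j - q (j + 1)) * E (j + 1) x * (q j - q (j + 1)) := by
    have hp : E (j + 1) (q j - q (j + 1)) = q j - q (j + 1) := by
      rw [map_sub, hqmem_succ, hqmem]
    exact hbimod _ _ _ x hp hp
  refine ⟨fun j => LinearMap.map_mul_sub_map_mul_eq_zero (hidem _) (hbimod_p j) f, fun N => ?_⟩
  calc ∑ j ∈ Finset.range N,
        traceNorm ((q j - q (j + 1)) * (f - E (j + 1) f) * (q j - q (j + 1)))
      ≤ ∑ j ∈ Finset.range N, 2 * ((q j - q (j + 1)) * f * (q j - q (j + 1))).trace.re :=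
        Finset.sum_le_sum fun j _ => traceNorm_compress_sub_le (hpos _) (htr _)
          ((hproj (j + 1)).sub_of_mul_eq_right (hproj j) (hqdec j).2).isSelfAdjoint
          (hbimod_p j) hf
    _ ≤ 2 * traceNorm f := by
        rw [← Finset.mul_sum, traceNorm_of_posSemidef hf]
        gcongr
        exact sum_re_trace_compress_sub_le hq0 hproj (fun j => (hqdec j).2) hf N

/-- Cuculescu construction (matrix-valued setting): given a filtration of conditional
expectations `E j`, a positive `f` and `λ > 0`, with Cuculescu projections `q j`
(decreasing, `q j ∈ M_j`, `q_j E_j(f) q_j ≤ λ q_j`, `q_j` commuting with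
`q_{j-1} E_j(f) q_{j-1}`) and `p_j = q_{j-1} - q_j`, the diagonal bad parts
`b_{d,j} = p_j (f - E_j f) p_j` satisfy `E_j(b_{d,j}) = 0` and `∑_j ‖b_{d,j}‖₁ ≤ 2‖f‖₁`. -/
theorem cz_diagonal_bad_parts {m : ℕ}
    (E : ℕ → Matrix (Fin m) (Fin m) ℂ →ₗ[ℂ] Matrix (Fin m) (Fin m) ℂ)
    (hidem : ∀ j, (E j).comp (E j) = E j)
    (htower : ∀ j k, (E j).comp (E k) = E (min j k))
    (hpos : ∀ j x, x.PosSemidef → (E j x).PosSemidef)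
    (htr : ∀ j x, (E j x).trace = x.trace)
    (hbimod : ∀ j (a b x : Matrix (Fin m) (Fin m) ℂ),
        E j a = a → E j b = b → E j (a * x * b) = a * E j x * b)
    (f : Matrix (Fin m) (Fin m) ℂ) (hf : f.PosSemidef)
    (lam : ℝ) (hlam : 0 < lam)
    (q : ℕ → Matrix (Fin m) (Fin m) ℂ)
    (hq0 : q 0 = 1)
    (hqmem : ∀ j, E j (q j) = q j)
    (hqproj : ∀ j, (q j)ᴴ = q j ∧ q j * q j = q j)
    (hqdec : ∀ j, q (j + 1) * q j = q (j + 1) ∧ q j * q (j + 1) = q (j + 1))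
    (hqlevel : ∀ j, ((lam : ℂ) • q j - q j * E j f * q j).PosSemidef)
    (hqcomm : ∀ j,
        q (j + 1) * (q j * E (j + 1) f * q j) = (q j * E (j + 1) f * q j) * q (j + 1)) :
    (∀ j : ℕ,
        E (j + 1) ((q j - q (j + 1)) * (f - E (j + 1) f) * (q j - q (j + 1))) = 0) ∧
      ∀ N : ℕ,
        ∑ j ∈ Finset.range N,
            traceNorm ((q j - q (j + 1)) * (f - E (j + 1) f) * (q j - q (j + 1)))
          ≤ 2 * traceNorm f :=
  cz_diagonal_bad_parts_general E hidem htower hpos htr hbimod f hf q hq0 hqmem hqproj hqdec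
end

section
/- In the setting of Cuculescu's construction, for all indices j ≠ k one has p_j E_{min(j,k)}(f) p_k = 0, and for all j ≥ 1 one has p_j E_j(f) q = 0 where q = ∧_j q_j. Consequently f decomposes as f = qfq + ∑_j p_j E_j(f) p_j + ∑_j p_j(f − E_j f)p_j + ∑_j [p_j(f − E_j f)q_j + q_j(f − E_j f)p_j]. -/
open Matrix
open scoped ComplexOrder

/-- In Cuculescu's construction (matrix-valued setting, with the filtration stabilized
after step `N`, so that `q = ∧ q_j = q N`): for `j ≠ k` one has
`p_j E_{j∧k}(f) p_k = 0`, for every `j` one has `p_j E_j(f) q = 0`, and consequently `f`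
decomposes as
`f = qfq + ∑_j p_j E_j(f) p_j + ∑_j p_j(f - E_j f)p_j + ∑_j [p_j(f - E_j f)q_j + q_j(f - E_j f)p_j]`. -/
theorem cz_decomposition_identities {m : ℕ}
    (E : ℕ → Matrix (Fin m) (Fin m) ℂ →ₗ[ℂ] Matrix (Fin m) (Fin m) ℂ)
    (hidem : ∀ j, (E j).comp (E j) = E j)
    (htower : ∀ j k, (E j).comp (E k) = E (min j k))
    (hpos : ∀ j x, x.PosSemidef → (E j x).PosSemidef)
    (htr : ∀ j x, (E j x).trace = x.trace)
    (hbimod : ∀ j (a b x : Matrix (Fin m) (Fin m) ℂ),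
        E j a = a → E j b = b → E j (a * x * b) = a * E j x * b)
    (f : Matrix (Fin m) (Fin m) ℂ) (hf : f.PosSemidef)
    (lam : ℝ) (hlam : 0 < lam)
    (q : ℕ → Matrix (Fin m) (Fin m) ℂ)
    (hq0 : q 0 = 1)
    (hqmem : ∀ j, E j (q j) = q j)
    (hqproj : ∀ j, (q j)ᴴ = q j ∧ q j * q j = q j)
    (hqdec : ∀ j, q (j + 1) * q j = q (j + 1) ∧ q j * q (j + 1) = q (j + 1))
    (hqlevel : ∀ j, ((lam : ℂ) • q j - q j * E j f * q j).PosSemidef)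
    (hqcomm : ∀ j,
        q (j + 1) * (q j * E (j + 1) f * q j) = (q j * E (j + 1) f * q j) * q (j + 1))
    (N : ℕ) (hstab : ∀ j, N ≤ j → q j = q N) :
    (∀ j k : ℕ, j ≠ k →
        (q j - q (j + 1)) * E (min (j + 1) (k + 1)) f * (q k - q (k + 1)) = 0) ∧
    (∀ j : ℕ, (q j - q (j + 1)) * E (j + 1) f * q N = 0) ∧
    f = q N * f * q N
        + ∑ j ∈ Finset.range N, (q j - q (j + 1)) * E (j + 1) f * (q j - q (j + 1))
        + ∑ j ∈ Finset.range N,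
            (q j - q (j + 1)) * (f - E (j + 1) f) * (q j - q (j + 1))
        + ∑ j ∈ Finset.range N,
            ((q j - q (j + 1)) * (f - E (j + 1) f) * q (j + 1)
              + q (j + 1) * (f - E (j + 1) f) * (q j - q (j + 1))) := by

  -- monotonicity of the projections
  have hmono : ∀ a b : ℕ, a ≤ b → q b * q a = q b ∧ q a * q b = q b := by
    intro a b hab
    induction b with
    | zero =>
      obtain rfl : a = 0 := Nat.le_zero.mp hab
      exact ⟨(hqproj 0).2, (hqproj 0).2⟩
    | succ b ih =>
      rcases Nat.lt_or_ge a (b + 1) with h | h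
      · obtain ⟨h1, h2⟩ := ih (Nat.lt_succ_iff.mp h)
        constructor
        · calc q (b + 1) * q a = (q (b + 1) * q b) * q a := by rw [(hqdec b).1]
            _ = q (b + 1) * (q b * q a) := mul_assoc _ _ _
            _ = q (b + 1) * q b := by rw [h1]
            _ = q (b + 1) := (hqdec b).1
        · calc q a * q (b + 1) = q a * (q b * q (b + 1)) := by rw [(hqdec b).2]
            _ = (q a * q b) * q (b + 1) := (mul_assoc _ _ _).symm
            _ = q b * q (b + 1) := by rw [h2]
            _ = q (b + 1) := (hqdec b).2
      · obtain rfl : a = b + 1 := le_antisymm hab h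
        exact ⟨(hqproj _).2, (hqproj _).2⟩
  have hpq : ∀ j, (q j - q (j + 1)) * q (j + 1) = 0 := by
    intro j
    rw [sub_mul, (hqdec j).2, (hqproj (j + 1)).2, sub_self]
  have hqp : ∀ j, q (j + 1) * (q j - q (j + 1)) = 0 := by
    intro j
    rw [mul_sub, (hqdec j).1, (hqproj (j + 1)).2, sub_self]
  have hpj : ∀ j, (q j - q (j + 1)) * q j = q j - q (j + 1) := by
    intro j
    rw [sub_mul, (hqproj j).2, (hqdec j).1]
  have hjp : ∀ j, q j * (q j - q (j + 1)) = q j - q (j + 1) := by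
    intro j
    rw [mul_sub, (hqproj j).2, (hqdec j).2]
  -- key vanishing identities
  have hsand : ∀ j, (q j - q (j + 1)) * E (j + 1) f * q (j + 1) = 0 := by
    intro j
    calc (q j - q (j + 1)) * E (j + 1) f * q (j + 1)
        = ((q j - q (j + 1)) * q j) * E (j + 1) f * (q j * q (j + 1)) := by
          rw [hpj j, (hqdec j).2]
      _ = (q j - q (j + 1)) * ((q j * E (j + 1) f * q j) * q (j + 1)) := by
          simp only [mul_assoc]
      _ = (q j - q (j + 1)) * (q (j + 1) * (q j * E (j + 1) f * q j)) := by
          rw [← hqcomm j]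
      _ = ((q j - q (j + 1)) * q (j + 1)) * (q j * E (j + 1) f * q j) := by
          simp only [mul_assoc]
      _ = 0 := by rw [hpq j, zero_mul]
  have hsand' : ∀ j, q (j + 1) * E (j + 1) f * (q j - q (j + 1)) = 0 := by
    intro j
    calc q (j + 1) * E (j + 1) f * (q j - q (j + 1))
        = (q (j + 1) * q j) * E (j + 1) f * (q j * (q j - q (j + 1))) := by
          rw [hjp j, (hqdec j).1]
      _ = (q (j + 1) * (q j * E (j + 1) f * q j)) * (q j - q (j + 1)) := by
          simp only [mul_assoc]
      _ = ((q j * E (j + 1) f * q j) * q (j + 1)) * (q j - q (j + 1)) := by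
          rw [hqcomm j]
      _ = (q j * E (j + 1) f * q j) * (q (j + 1) * (q j - q (j + 1))) := by
          simp only [mul_assoc]
      _ = 0 := by rw [hqp j, mul_zero]
  refine ⟨?_, ?_, ?_⟩
  · -- first claim
    intro j k hjk
    rcases lt_or_gt_of_ne hjk with h | h
    · -- j < k, min = j + 1
      have hmin : min (j + 1) (k + 1) = j + 1 := by omega
      rw [hmin]
      have h1 : q (j + 1) * q k = q k := (hmono (j + 1) k h).2
      have h2 : q (j + 1) * q (k + 1) = q (k + 1) :=
        (hmono (j + 1) (k + 1) (by omega)).2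
      have h3 : q (j + 1) * (q k - q (k + 1)) = q k - q (k + 1) := by
        rw [mul_sub, h1, h2]
      calc (q j - q (j + 1)) * E (j + 1) f * (q k - q (k + 1))
          = (q j - q (j + 1)) * E (j + 1) f * (q (j + 1) * (q k - q (k + 1))) := by
            rw [h3]
        _ = ((q j - q (j + 1)) * E (j + 1) f * q (j + 1)) * (q k - q (k + 1)) := by
            simp only [mul_assoc]
        _ = 0 := by rw [hsand j, zero_mul]
    · -- k < j, min = k + 1
      have hmin : min (j + 1) (k + 1) = k + 1 := by omega
      rw [hmin]
      have h1 : q j * q (k + 1) = q j := (hmono (k + 1) j h).1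
      have h2 : q (j + 1) * q (k + 1) = q (j + 1) :=
        (hmono (k + 1) (j + 1) (by omega)).1
      have h3 : (q j - q (j + 1)) * q (k + 1) = q j - q (j + 1) := by
        rw [sub_mul, h1, h2]
      calc (q j - q (j + 1)) * E (k + 1) f * (q k - q (k + 1))
          = ((q j - q (j + 1)) * q (k + 1)) * E (k + 1) f * (q k - q (k + 1)) := by
            rw [h3]
        _ = (q j - q (j + 1)) * (q (k + 1) * E (k + 1) f * (q k - q (k + 1))) := by
            simp only [mul_assoc]
        _ = 0 := by rw [hsand' k, mul_zero]
  · -- second claim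
    intro j
    rcases Nat.lt_or_ge j N with h | h
    · have h1 : q (j + 1) * q N = q N := (hmono (j + 1) N h).2
      calc (q j - q (j + 1)) * E (j + 1) f * q N
          = (q j - q (j + 1)) * E (j + 1) f * (q (j + 1) * q N) := by rw [h1]
        _ = ((q j - q (j + 1)) * E (j + 1) f * q (j + 1)) * q N := by
            simp only [mul_assoc]
        _ = 0 := by rw [hsand j, zero_mul]
    · have h1 : q j = q N := hstab j h
      have h2 : q (j + 1) = q N := hstab (j + 1) (by omega)
      rw [h1, h2, sub_self, zero_mul, zero_mul]
  · -- decomposition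
    have hS : ∀ j,
        (q j - q (j + 1)) * E (j + 1) f * (q j - q (j + 1))
          + (q j - q (j + 1)) * (f - E (j + 1) f) * (q j - q (j + 1))
          + ((q j - q (j + 1)) * (f - E (j + 1) f) * q (j + 1)
              + q (j + 1) * (f - E (j + 1) f) * (q j - q (j + 1)))
        = q j * f * q j - q (j + 1) * f * q (j + 1) := by
      intro j
      have key :
          (q j - q (j + 1)) * E (j + 1) f * (q j - q (j + 1))
            + (q j - q (j + 1)) * (f - E (j + 1) f) * (q j - q (j + 1))
            + ((q j - q (j + 1)) * (f - E (j + 1) f) * q (j + 1)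
                + q (j + 1) * (f - E (j + 1) f) * (q j - q (j + 1)))
          = q j * f * q j - q (j + 1) * f * q (j + 1)
            - (q j - q (j + 1)) * E (j + 1) f * q (j + 1)
            - q (j + 1) * E (j + 1) f * (q j - q (j + 1)) := by
        noncomm_ring
      rw [key, hsand j, hsand' j, sub_zero, sub_zero]
    have htel : ∑ j ∈ Finset.range N,
        ((q j - q (j + 1)) * E (j + 1) f * (q j - q (j + 1))
          + (q j - q (j + 1)) * (f - E (j + 1) f) * (q j - q (j + 1))
          + ((q j - q (j + 1)) * (f - E (j + 1) f) * q (j + 1)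
              + q (j + 1) * (f - E (j + 1) f) * (q j - q (j + 1))))
        = f - q N * f * q N := by
      rw [Finset.sum_congr rfl fun j _ => hS j,
        Finset.sum_range_sub' (fun j => q j * f * q j) N, hq0, one_mul, mul_one]
    rw [Finset.sum_add_distrib, Finset.sum_add_distrib] at htel
    calc f = q N * f * q N + (f - q N * f * q N) := by abel
      _ = _ := by rw [← htel]; abel
end

section
/- Let G be a discrete group, (Λ_α) a Følner net, and for each α let j_α : L(G) → B(ℓ₂(Λ_α)) be given by j_α(f) = π_α (∑_{g,h} f̂(gh^{-1}) e_{gh}) π_α, where π_α is the projection onto ℓ₂(Λ_α) and B(ℓ₂(Λ_α)) carries the normalized trace tr/|Λ_α|. Then for all g ∈ G, lim_α (1/|Λ_α|) tr(j_α(λ(g)) j_α(λ(g^{-1}))) = 1, and more generally lim_α (1/|Λ_α|) tr(j_α(λ(g₁)) j_α(λ(g₂))) = δ_{g₁ g₂ = e} = τ(λ(g₁)λ(g₂)). -/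
open Filter Topology

theorem trace_aux {G : Type*} [Group G] [DecidableEq G] (Λ : Finset G) (g₁ g₂ : G) :
    Matrix.trace
            ((Matrix.of fun h h' : ↥Λ =>
                if (h : G) * (h' : G)⁻¹ = g₁ then (1 : ℂ) else 0) *
             (Matrix.of fun h h' : ↥Λ =>
                if (h : G) * (h' : G)⁻¹ = g₂ then (1 : ℂ) else 0))
    = if g₁ * g₂ = 1 then ((Λ ∩ Λ.image (g₁ * ·)).card : ℂ) else 0 := by
  rw [Matrix.trace]
  simp only [Matrix.diag, Matrix.mul_apply, Matrix.of_apply]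
  rw [Finset.sum_coe_sort Λ (fun h => ∑ h' : ↥Λ,
    (if h * (h' : G)⁻¹ = g₁ then (1:ℂ) else 0) * (if (h' : G) * h⁻¹ = g₂ then 1 else 0))]
  have key : ∀ h ∈ Λ, (∑ h' : ↥Λ,
      (if h * (h' : G)⁻¹ = g₁ then (1:ℂ) else 0) * (if (h' : G) * h⁻¹ = g₂ then 1 else 0))
      = ∑ h' ∈ Λ, (if h * h'⁻¹ = g₁ then (1:ℂ) else 0) * (if h' * h⁻¹ = g₂ then 1 else 0) := by
    intro h _
    exact Finset.sum_coe_sort Λ (fun h' =>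
      (if h * h'⁻¹ = g₁ then (1:ℂ) else 0) * (if h' * h⁻¹ = g₂ then 1 else 0))
  rw [Finset.sum_congr rfl key]
  by_cases hg : g₁ * g₂ = 1
  · rw [if_pos hg]
    have hg2 : g₂ = g₁⁻¹ := (inv_eq_of_mul_eq_one_right hg).symm
    subst hg2
    have step : ∀ h ∈ Λ, (∑ h' ∈ Λ, (if h * h'⁻¹ = g₁ then (1:ℂ) else 0) *
        (if h' * h⁻¹ = g₁⁻¹ then 1 else 0)) = if g₁⁻¹ * h ∈ Λ then 1 else 0 := by
      intro h _
      rw [← Finset.sum_ite_eq' Λ (g₁⁻¹ * h) (fun _ => (1:ℂ))]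
      refine Finset.sum_congr rfl fun h' _ => ?_
      have e1 : (h * h'⁻¹ = g₁) ↔ h' = g₁⁻¹ * h := by
        constructor <;> intro e <;> [skip; subst e] <;> [skip; group]
        rw [← e]; group
      have e2 : (h' * h⁻¹ = g₁⁻¹) ↔ h' = g₁⁻¹ * h := by
        constructor <;> intro e
        · rw [← e]; group
        · subst e; group
      simp only [e1, e2]
      by_cases hh : h' = g₁⁻¹ * h <;> simp [hh]
    rw [Finset.sum_congr rfl step, Finset.sum_boole]
    congr 1
    congr 1
    ext x
    simp only [Finset.mem_filter, Finset.mem_inter, Finset.mem_image]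
    constructor
    · rintro ⟨hx, hx'⟩
      exact ⟨hx, ⟨g₁⁻¹ * x, hx', by group⟩⟩
    · rintro ⟨hx, y, hy, rfl⟩
      refine ⟨hx, ?_⟩
      simpa using hy
  · rw [if_neg hg]
    refine Finset.sum_eq_zero fun h _ => Finset.sum_eq_zero fun h' _ => ?_
    rw [ite_mul, one_mul, zero_mul]
    split_ifs with h1 h2
    · exact absurd (by rw [← h1, ← h2]; group) hg
    · rfl
    · rfl

/-- Følner transference of the trace: for a Følner net `(Λ_α)` in a discrete group `G`,
the compressions `j_α(λ(g)) = π_α j(λ(g)) π_α` (matrices `(δ_{h h'⁻¹ = g})_{h,h' ∈ Λ_α}`)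
satisfy `lim_α |Λ_α|⁻¹ tr(j_α(λ(g₁)) j_α(λ(g₂))) = δ_{g₁g₂ = e} = τ(λ(g₁)λ(g₂))`;
in particular the limit is `1` when `g₂ = g₁⁻¹`. -/
theorem folner_trace_limit {G ι : Type*} [Group G] [DecidableEq G]
    (F : Filter ι) [F.NeBot] (Λ : ι → Finset G) (hne : ∀ a, (Λ a).Nonempty)
    (hFolner : ∀ g : G,
      Tendsto (fun a => (((Λ a) ∩ (Λ a).image (g * ·)).card : ℝ) / (Λ a).card) F (𝓝 1))
    (g₁ g₂ : G) :
    Tendsto (fun a =>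
        (1 / ((Λ a).card : ℂ)) *
          Matrix.trace
            ((Matrix.of fun h h' : ↥(Λ a) =>
                if (h : G) * (h' : G)⁻¹ = g₁ then (1 : ℂ) else 0) *
             (Matrix.of fun h h' : ↥(Λ a) =>
                if (h : G) * (h' : G)⁻¹ = g₂ then (1 : ℂ) else 0)))
      F (𝓝 (if g₁ * g₂ = 1 then (1 : ℂ) else 0)) := by
  simp only [trace_aux]
  by_cases hg : g₁ * g₂ = 1
  · simp only [if_pos hg]
    have := (Complex.continuous_ofReal.tendsto 1).comp (hFolner g₁)
    simp only [Complex.ofReal_one] at this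
    convert this using 2 with a
    simp only [Function.comp_apply]
    push_cast
    ring
  · simp only [if_neg hg, mul_zero]
    exact tendsto_const_nhds
end
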